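/- Entry bound for R·B·R (first-derivative resolvent estimate). Fix d, N_b ≥ 1 and 𝔪, c₁ > 0. There exists C > 0, depending only on d, N_b, 𝔪, c₁, such that the following holds. Let Λ be a countable set, y : Λ → ℝ^d 𝔪-separated, m ∈ Λ, and let 𝔡, γ, γ₁ > 0. Let R and B be bounded operators on ℓ²(Λ × {1,…,N_b}) whose matrix entries satisfy |R^{ab}_{ℓk}| ≤ (2/𝔡) e^{−γ r_{ℓk}} and |B^{ab}_{ℓk}| ≤ c₁ e^{−γ₁ (r_{ℓm} + r_{mk})} for all ℓ,k,a,b. Then, with η := min{γ, γ₁}, for all ℓ ∈ Λ and 1 ≤ a ≤ N_b: |(R B R)^{aa}_{ℓℓ}| ≤ C 𝔡^{−2} (1 + η^{−4d}) e^{−(η/2) r_{ℓm}}. -/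

import Mathlib

/-!
Write `(RBR)_{ℓℓ} = ∑_{p,q} R_{ℓp} B_{pq} R_{qℓ}` (orbital indices suppressed). The decay of `R` and
`B` together with the triangle inequality `r_{ℓm} ≤ r_{ℓq} + r_{qm}` bounds each term by a constant
times `e^{-(η/2) r_{ℓm}} e^{-(η/2) r_{pℓ}} e^{-(η/2) r_{qℓ}}`, so the entry is at most
`e^{-(η/2) r_{ℓm}}` times the square of the lattice sum `∑_q e^{-(η/2) r_{qℓ}}`. For an
`𝔪`-separated set the balls of radius `𝔪/2` around the points are disjoint, which bounds
`∑_q e^{-t |y_q - c|}` by a multiple of `∫ e^{-t|x|} dx = t^{-d} ∫ e^{-|x|} dx` when `t ≤ 1`.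
-/

/-- Matrix entry `T^{ab}_{ℓk} = ⟨δ_{(ℓ,a)}, T δ_{(k,b)}⟩` of a bounded operator on `ℓ²(ι)`. -/
noncomputable def entry {ι : Type*} [DecidableEq ι]
    (T : lp (fun _ : ι => ℂ) 2 →L[ℂ] lp (fun _ : ι => ℂ) 2) (i j : ι) : ℂ :=
  inner ℂ (lp.single 2 i (1 : ℂ)) (T (lp.single 2 j (1 : ℂ)))

open MeasureTheory Metric Module ENNReal

lemma one_add_pow_le_pow_mul_exp {n : ℕ} (hn : n ≠ 0) {s : ℝ} (hs : 0 ≤ s) :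
    (1 + s) ^ n ≤ n ^ n * Real.exp s := by
  have hn' : (1 : ℝ) ≤ n := by exact_mod_cast Nat.one_le_iff_ne_zero.2 hn
  calc (1 + s) ^ n ≤ (n * (s / n + 1)) ^ n := by
        gcongr
        rw [mul_add, mul_div_cancel₀ _ (by positivity)]
        linarith
    _ = n ^ n * (s / n + 1) ^ n := mul_pow _ _ _
    _ ≤ n ^ n * Real.exp (s / n) ^ n := by
        gcongr
        exact Real.add_one_le_exp _
    _ = n ^ n * Real.exp s := by
        rw [← Real.exp_nat_mul, mul_div_cancel₀ _ (by positivity)]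

lemma one_add_two_mul_pow_le (n : ℕ) {x : ℝ} (hx : 0 ≤ x) :
    (1 + 2 * x) ^ n ≤ 3 ^ n * (1 + x ^ (2 * n)) := by
  rcases le_total x 1 with hx1 | hx1
  · calc (1 + 2 * x) ^ n ≤ 3 ^ n := by gcongr; linarith
      _ ≤ 3 ^ n * (1 + x ^ (2 * n)) :=
        le_mul_of_one_le_right (by positivity) (le_add_of_nonneg_right (by positivity))
  · calc (1 + 2 * x) ^ n ≤ (3 * x) ^ n := by gcongr; linarith
      _ = 3 ^ n * x ^ n := mul_pow _ _ _
      _ ≤ 3 ^ n * (1 + x ^ (2 * n)) := by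
        gcongr
        calc x ^ n ≤ x ^ (2 * n) := pow_le_pow_right₀ hx1 (by omega)
          _ ≤ 1 + x ^ (2 * n) := le_add_of_nonneg_left zero_le_one

section HaarIntegrals

variable {E : Type*} [NormedAddCommGroup E] [NormedSpace ℝ E] [FiniteDimensional ℝ E]
  [MeasurableSpace E] [BorelSpace E] (μ : Measure E) [μ.IsAddHaarMeasure]

lemma lintegral_exp_neg_norm_lt_top : ∫⁻ x, ENNReal.ofReal (Real.exp (-‖x‖)) ∂μ < ⊤ := by
  set n := finrank ℝ E + 1
  have hbound : ∀ x : E, ENNReal.ofReal (Real.exp (-‖x‖)) ≤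
      ENNReal.ofReal ((n : ℝ) ^ n) * ENNReal.ofReal ((1 + ‖x‖) ^ (-(n : ℝ))) := by
    intro x
    rw [← ENNReal.ofReal_mul (by positivity)]
    refine ENNReal.ofReal_le_ofReal ?_
    have h := one_add_pow_le_pow_mul_exp (n := n) (Nat.succ_ne_zero _) (norm_nonneg x)
    rw [Real.rpow_neg (by positivity), Real.rpow_natCast, ← div_eq_mul_inv,
      le_div_iff₀ (by positivity)]
    calc Real.exp (-‖x‖) * (1 + ‖x‖) ^ n ≤ Real.exp (-‖x‖) * (n ^ n * Real.exp ‖x‖) := by gcongr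
      _ = n ^ n := by rw [mul_left_comm, ← Real.exp_add, neg_add_cancel, Real.exp_zero, mul_one]
  calc ∫⁻ x, ENNReal.ofReal (Real.exp (-‖x‖)) ∂μ
      ≤ ∫⁻ x, ENNReal.ofReal ((n : ℝ) ^ n) * ENNReal.ofReal ((1 + ‖x‖) ^ (-(n : ℝ))) ∂μ :=
        lintegral_mono hbound
    _ < ⊤ := by
        rw [lintegral_const_mul' _ _ ofReal_ne_top]
        exact mul_lt_top ofReal_lt_top (finite_integral_one_add_norm (by simp [n]))

lemma lintegral_exp_neg_mul_norm {t : ℝ} (ht : 0 < t) :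
    ∫⁻ x, ENNReal.ofReal (Real.exp (-t * ‖x‖)) ∂μ =
      ENNReal.ofReal ((t ^ finrank ℝ E)⁻¹) * ∫⁻ x, ENNReal.ofReal (Real.exp (-‖x‖)) ∂μ := by
  calc ∫⁻ x, ENNReal.ofReal (Real.exp (-t * ‖x‖)) ∂μ
      = ∫⁻ x, ENNReal.ofReal (Real.exp (-‖t • x‖)) ∂μ := by
        simp only [norm_smul, Real.norm_of_nonneg ht.le, neg_mul]
    _ = ∫⁻ x, ENNReal.ofReal (Real.exp (-‖x‖)) ∂(Measure.map (t • ·) μ) :=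
        (lintegral_map (f := fun x => ENNReal.ofReal (Real.exp (-‖x‖))) (by fun_prop)
          (measurable_const_smul t)).symm
    _ = _ := by
        rw [Measure.map_addHaar_smul μ ht.ne', lintegral_smul_measure,
          abs_of_pos (by positivity), smul_eq_mul]

lemma tsum_exp_neg_mul_dist_mul_measure_ball_le {Λ : Type*} [Countable Λ] {y : Λ → E} {𝔪 : ℝ}
    (hsep : ∀ ℓ k, ℓ ≠ k → 𝔪 ≤ dist (y ℓ) (y k)) (c : E) {t : ℝ} (ht : 0 ≤ t) :
    (∑' q, ENNReal.ofReal (Real.exp (-t * dist (y q) c))) * μ (ball 0 (𝔪 / 2)) ≤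
      ENNReal.ofReal (Real.exp (t * (𝔪 / 2))) *
        ∫⁻ x, ENNReal.ofReal (Real.exp (-t * ‖x‖)) ∂μ := by
  set f : E → ℝ≥0∞ := fun x => ENNReal.ofReal (Real.exp (t * (𝔪 / 2)) * Real.exp (-t * dist x c))
  have hdisj : Pairwise (Function.onFun Disjoint fun q => ball (y q) (𝔪 / 2)) :=
    fun q k hqk => ball_disjoint_ball (by linarith [hsep q k hqk])
  -- on `ball (y q) (𝔪 / 2)` the weight `exp (-t * dist · c)` drops by at most `exp (t * 𝔪 / 2)`
  have hball (q : Λ) : ENNReal.ofReal (Real.exp (-t * dist (y q) c)) * μ (ball 0 (𝔪 / 2)) ≤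
      ∫⁻ x in ball (y q) (𝔪 / 2), f x ∂μ := by
    rw [← Measure.addHaar_ball_center μ (y q), ← setLIntegral_const]
    refine setLIntegral_mono (by fun_prop) fun x hx => ENNReal.ofReal_le_ofReal ?_
    rw [← Real.exp_add, Real.exp_le_exp]
    have := dist_triangle x (y q) c
    nlinarith [mem_ball.mp hx]
  calc (∑' q, ENNReal.ofReal (Real.exp (-t * dist (y q) c))) * μ (ball 0 (𝔪 / 2))
      ≤ ∑' q, ∫⁻ x in ball (y q) (𝔪 / 2), f x ∂μ := by
        rw [← ENNReal.tsum_mul_right]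
        exact ENNReal.tsum_le_tsum hball
    _ = ∫⁻ x in ⋃ q, ball (y q) (𝔪 / 2), f x ∂μ :=
        (lintegral_iUnion (fun _ => measurableSet_ball) hdisj f).symm
    _ ≤ ∫⁻ x, f x ∂μ := setLIntegral_le_lintegral _ _
    _ = _ := by
        simp only [f, ENNReal.ofReal_mul (Real.exp_nonneg _), dist_eq_norm]
        rw [lintegral_const_mul' _ _ ofReal_ne_top,
          lintegral_sub_right_eq_self (fun x => ENNReal.ofReal (Real.exp (-t * ‖x‖))) c]

end HaarIntegrals

lemma summable_and_tsum_le_of_tsum_ofReal_le {ι : Type*} {f : ι → ℝ} (hf : ∀ i, 0 ≤ f i)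
    {B : ℝ≥0∞} (hB : B ≠ ⊤) (h : ∑' i, ENNReal.ofReal (f i) ≤ B) :
    Summable f ∧ ∑' i, f i ≤ B.toReal := by
  have hfin : ∑' i, ENNReal.ofReal (f i) ≠ ⊤ := ne_top_of_le_ne_top hB h
  have htoReal (i : ι) : (ENNReal.ofReal (f i)).toReal = f i := ENNReal.toReal_ofReal (hf i)
  refine ⟨by simpa only [htoReal] using ENNReal.summable_toReal hfin, ?_⟩
  calc ∑' i, f i = (∑' i, ENNReal.ofReal (f i)).toReal := by
        rw [ENNReal.tsum_toReal_eq fun _ => ofReal_ne_top]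
        simp only [htoReal]
    _ ≤ B.toReal := ENNReal.toReal_mono hB h

theorem exists_tsum_exp_neg_mul_dist_le (E : Type*) [NormedAddCommGroup E] [NormedSpace ℝ E]
    [FiniteDimensional ℝ E] {𝔪 : ℝ} (h𝔪 : 0 < 𝔪) :
    ∃ K : ℝ, 0 < K ∧ ∀ {Λ : Type*} [Countable Λ] (y : Λ → E),
      (∀ ℓ k, ℓ ≠ k → 𝔪 ≤ dist (y ℓ) (y k)) → ∀ (c : E) {t : ℝ}, 0 < t →
        Summable (fun q => Real.exp (-t * dist (y q) c)) ∧
          ∑' q, Real.exp (-t * dist (y q) c) ≤ K * (1 + t⁻¹) ^ finrank ℝ E := by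
  let _ : MeasurableSpace E := borel E
  have _ : BorelSpace E := ⟨rfl⟩
  set μ : Measure E := Measure.addHaar
  set V := μ (ball 0 (𝔪 / 2))
  have hV : V ≠ 0 := (measure_ball_pos μ _ (by positivity)).ne'
  set K' : ℝ≥0∞ := V⁻¹ * ENNReal.ofReal (Real.exp (𝔪 / 2)) *
    ∫⁻ x, ENNReal.ofReal (Real.exp (-‖x‖)) ∂μ
  have hK' : K' ≠ ⊤ := mul_ne_top (mul_ne_top (inv_ne_top.2 hV) ofReal_ne_top)
    (lintegral_exp_neg_norm_lt_top μ).ne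
  refine ⟨max K'.toReal 1, by positivity, fun {Λ} _ y hsep c t ht => ?_⟩
  -- compare with the weight at `t' = min t 1`, so that the factor `exp (t' * 𝔪 / 2)` stays bounded
  set t' := min t 1 with ht'_def
  have ht' : 0 < t' := lt_min ht one_pos
  have hinv : t'⁻¹ ≤ 1 + t⁻¹ := by
    rcases le_total t 1 with h | h
    · rw [ht'_def, min_eq_left h]; linarith [inv_pos.2 ht]
    · rw [ht'_def, min_eq_right h, inv_one]; linarith [inv_pos.2 ht]
  have hmono : ∑' q, ENNReal.ofReal (Real.exp (-t * dist (y q) c)) ≤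
      ∑' q, ENNReal.ofReal (Real.exp (-t' * dist (y q) c)) := by
    refine ENNReal.tsum_le_tsum fun q => ENNReal.ofReal_le_ofReal ?_
    gcongr
    exact min_le_left _ _
  have hball := tsum_exp_neg_mul_dist_mul_measure_ball_le μ hsep c ht'.le
  rw [lintegral_exp_neg_mul_norm μ ht'] at hball
  have hbound : ∑' q, ENNReal.ofReal (Real.exp (-t * dist (y q) c)) ≤
      ENNReal.ofReal ((1 + t⁻¹) ^ finrank ℝ E) * K' := by
    refine hmono.trans ((ENNReal.le_div_iff_mul_le (.inl hV) (.inl measure_ball_lt_top.ne)).2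
      hball |>.trans ?_)
    calc ENNReal.ofReal (Real.exp (t' * (𝔪 / 2))) *
          (ENNReal.ofReal ((t' ^ finrank ℝ E)⁻¹) * ∫⁻ x, ENNReal.ofReal (Real.exp (-‖x‖)) ∂μ) / V
        ≤ ENNReal.ofReal (Real.exp (𝔪 / 2)) *
          (ENNReal.ofReal ((1 + t⁻¹) ^ finrank ℝ E) * ∫⁻ x, ENNReal.ofReal (Real.exp (-‖x‖)) ∂μ)
            / V := by
          gcongr
          · exact mul_le_of_le_one_left (by positivity) (min_le_right _ _)
          · rw [← inv_pow]; gcongr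
      _ = _ := by rw [div_eq_mul_inv]; ring
  obtain ⟨hsum, htsum⟩ := summable_and_tsum_le_of_tsum_ofReal_le (fun _ => (Real.exp_pos _).le)
    (mul_ne_top ofReal_ne_top hK') hbound
  refine ⟨hsum, htsum.trans ?_⟩
  rw [ENNReal.toReal_mul, ENNReal.toReal_ofReal (by positivity), mul_comm]
  gcongr
  exact le_max_left _ _

theorem HasSum.comp_fst_prod {ι κ : Type*} [Fintype κ] {w : ι → ℝ} {s : ℝ} (hw : HasSum w s) :
    HasSum (fun p : ι × κ => w p.1) (Fintype.card κ * s) := by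
  have hs : Summable fun p : ι × κ => w p.1 * (1 : ℝ) :=
    summable_mul_of_summable_norm (f := w) (g := fun _ : κ => (1 : ℝ)) hw.summable.abs
      Summable.of_finite
  simpa [mul_comm] using hw.mul (hasSum_fintype fun _ : κ => (1 : ℝ)) hs

section Entries

variable {ι : Type*} [DecidableEq ι]

lemma entry_eq_apply (T : lp (fun _ : ι => ℂ) 2 →L[ℂ] lp (fun _ : ι => ℂ) 2) (i j : ι) :
    entry T i j = T (lp.single 2 j 1) i := by
  simp [entry, lp.inner_single_left]

lemma hasSum_entry_comp (S T : lp (fun _ : ι => ℂ) 2 →L[ℂ] lp (fun _ : ι => ℂ) 2) (i k : ι) :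
    HasSum (fun j => entry S i j * entry T j k) (entry (S ∘L T) i k) := by
  set x := T (lp.single 2 k 1)
  have h := ((innerSL ℂ (lp.single 2 i (1 : ℂ))).comp S).hasSum
    (lp.hasSum_single ENNReal.ofNat_ne_top x)
  refine h.congr_fun fun j => ?_
  have hsingle : lp.single 2 j (x j) = x j • (lp.single 2 j 1 : lp (fun _ : ι => ℂ) 2) := by
    rw [← lp.single_smul (E := fun _ : ι => ℂ), smul_eq_mul, mul_one]
  rw [hsingle, map_smul, entry_eq_apply T j k, mul_comm]
  rfl

lemma norm_entry_comp_le {κ : Type*} [Fintype κ] [DecidableEq κ]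
    (S T : lp (fun _ : ι × κ => ℂ) 2 →L[ℂ] lp (fun _ : ι × κ => ℂ) 2) (i k : ι × κ)
    {w : ι → ℝ} (hw : Summable w) (A : ℝ)
    (h : ∀ q b, ‖entry S i (q, b)‖ * ‖entry T (q, b) k‖ ≤ A * w q) :
    ‖entry (S ∘L T) i k‖ ≤ Fintype.card κ * A * ∑' q, w q := by
  have hA : HasSum (fun p : ι × κ => A * w p.1) (Fintype.card κ * A * ∑' q, w q) := by
    rw [mul_assoc, ← tsum_mul_left]
    exact (hw.mul_left A).hasSum.comp_fst_prod
  exact (hasSum_entry_comp S T i k).norm_le_of_bounded hA fun ⟨q, b⟩ =>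
    (norm_mul_le _ _).trans (h q b)

end Entries

section DecayingKernels

variable {Λ κ P : Type*} [DecidableEq Λ] [Fintype κ] [DecidableEq κ] [PseudoMetricSpace P]
  {y : Λ → P} {m : Λ} {ρ c₁ γ γ₁ t : ℝ}
  {R B : lp (fun _ : Λ × κ => ℂ) 2 →L[ℂ] lp (fun _ : Λ × κ => ℂ) 2}

lemma norm_entry_comp_le_of_decay
    (hR : ∀ ℓ k a b, ‖entry R (ℓ, a) (k, b)‖ ≤ ρ * Real.exp (-γ * dist (y ℓ) (y k)))
    (hB : ∀ ℓ k a b,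
      ‖entry B (ℓ, a) (k, b)‖ ≤ c₁ * Real.exp (-γ₁ * (dist (y ℓ) (y m) + dist (y m) (y k))))
    (hρ : 0 ≤ ρ) (hc₁ : 0 ≤ c₁) (ht : 0 ≤ t) (hγ : 2 * t ≤ γ) (hγ₁ : t ≤ γ₁) {ℓ : Λ}
    (hS : Summable fun q => Real.exp (-t * dist (y q) (y ℓ))) (p : Λ) (a b : κ) :
    ‖entry (B ∘L R) (p, b) (ℓ, a)‖ ≤
      Fintype.card κ *
          (c₁ * ρ * Real.exp (-γ₁ * dist (y p) (y m)) * Real.exp (-t * dist (y ℓ) (y m))) *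
        ∑' q, Real.exp (-t * dist (y q) (y ℓ)) := by
  refine norm_entry_comp_le B R _ _ hS _ fun q b' => ?_
  have htri : dist (y ℓ) (y m) ≤ dist (y q) (y ℓ) + dist (y m) (y q) := by
    linarith [dist_triangle (y ℓ) (y q) (y m), dist_comm (y ℓ) (y q), dist_comm (y q) (y m)]
  calc ‖entry B (p, b) (q, b')‖ * ‖entry R (q, b') (ℓ, a)‖
      ≤ c₁ * Real.exp (-γ₁ * (dist (y p) (y m) + dist (y m) (y q))) *
          (ρ * Real.exp (-γ * dist (y q) (y ℓ))) :=
        mul_le_mul (hB ..) (hR ..) (norm_nonneg _) (by positivity)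
    _ = c₁ * ρ * Real.exp (-γ₁ * dist (y p) (y m) +
          (-γ₁ * dist (y m) (y q) + -γ * dist (y q) (y ℓ))) := by
        simp only [mul_add, Real.exp_add]; ring
    _ ≤ c₁ * ρ * Real.exp (-γ₁ * dist (y p) (y m) +
          (-t * dist (y ℓ) (y m) + -t * dist (y q) (y ℓ))) := by
        refine mul_le_mul_of_nonneg_left (Real.exp_le_exp.2 ?_) (by positivity)
        linarith [mul_le_mul_of_nonneg_left htri ht,
          mul_le_mul_of_nonneg_right hγ₁ (dist_nonneg (x := y m) (y := y q)),
          mul_le_mul_of_nonneg_right hγ (dist_nonneg (x := y q) (y := y ℓ))]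
    _ = _ := by rw [Real.exp_add, Real.exp_add]; ring

theorem norm_entry_comp_comp_le_of_decay
    (hR : ∀ ℓ k a b, ‖entry R (ℓ, a) (k, b)‖ ≤ ρ * Real.exp (-γ * dist (y ℓ) (y k)))
    (hB : ∀ ℓ k a b,
      ‖entry B (ℓ, a) (k, b)‖ ≤ c₁ * Real.exp (-γ₁ * (dist (y ℓ) (y m) + dist (y m) (y k))))
    (hρ : 0 ≤ ρ) (hc₁ : 0 ≤ c₁) (ht : 0 ≤ t) (hγ : 2 * t ≤ γ) (hγ₁ : t ≤ γ₁) {ℓ : Λ}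
    (hS : Summable fun q => Real.exp (-t * dist (y q) (y ℓ))) (a : κ) :
    ‖entry (R ∘L B ∘L R) (ℓ, a) (ℓ, a)‖ ≤
      Fintype.card κ ^ 2 * ρ ^ 2 * c₁ * (∑' q, Real.exp (-t * dist (y q) (y ℓ))) ^ 2 *
        Real.exp (-t * dist (y ℓ) (y m)) := by
  have htγ : t ≤ γ := by linarith
  set S := ∑' q, Real.exp (-t * dist (y q) (y ℓ))
  have hS0 : 0 ≤ S := tsum_nonneg fun _ => (Real.exp_pos _).le
  set A := Fintype.card κ * ρ ^ 2 * c₁ * S * Real.exp (-t * dist (y ℓ) (y m))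
  have hA : 0 ≤ A := by positivity
  calc ‖entry (R ∘L B ∘L R) (ℓ, a) (ℓ, a)‖ ≤ Fintype.card κ * A * S := by
        refine norm_entry_comp_le R (B ∘L R) _ _ hS A fun p b => ?_
        calc ‖entry R (ℓ, a) (p, b)‖ * ‖entry (B ∘L R) (p, b) (ℓ, a)‖
            ≤ ρ * Real.exp (-γ * dist (y ℓ) (y p)) *
                (Fintype.card κ * (c₁ * ρ * Real.exp (-γ₁ * dist (y p) (y m)) *
                  Real.exp (-t * dist (y ℓ) (y m))) * S) :=
              mul_le_mul (hR ..) (norm_entry_comp_le_of_decay hR hB hρ hc₁ ht hγ hγ₁ hS p a b)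
                (norm_nonneg _) (by positivity)
          _ = A * Real.exp (-γ * dist (y ℓ) (y p) + -γ₁ * dist (y p) (y m)) := by
              rw [Real.exp_add]; ring
          _ ≤ A * Real.exp (-t * dist (y p) (y ℓ)) := by
              refine mul_le_mul_of_nonneg_left (Real.exp_le_exp.2 ?_) hA
              rw [dist_comm (y ℓ) (y p)]
              linarith [mul_le_mul_of_nonneg_right htγ (dist_nonneg (x := y p) (y := y ℓ)),
                mul_nonneg (ht.trans hγ₁) (dist_nonneg (x := y p) (y := y m))]
    _ = _ := by ring

end DecayingKernels

theorem stmt6_general (d Nb : ℕ) (hNb : 1 ≤ Nb) (𝔪 c₁ : ℝ)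
    (h𝔪 : 0 < 𝔪) (hc₁ : 0 < c₁) :
    ∃ C : ℝ, 0 < C ∧
      ∀ (Λ : Type) [Countable Λ] [DecidableEq Λ]
        (y : Λ → EuclideanSpace ℝ (Fin d)),
        (∀ ℓ k : Λ, ℓ ≠ k → 𝔪 ≤ dist (y ℓ) (y k)) →
        ∀ (m : Λ) (𝔡 γ γ₁ : ℝ), 0 < 𝔡 → 0 < γ → 0 < γ₁ →
          ∀ R B : lp (fun _ : Λ × Fin Nb => ℂ) 2 →L[ℂ] lp (fun _ : Λ × Fin Nb => ℂ) 2,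
            (∀ (ℓ k : Λ) (a b : Fin Nb),
              ‖entry R (ℓ, a) (k, b)‖ ≤ (2 / 𝔡) * Real.exp (-γ * dist (y ℓ) (y k))) →
            (∀ (ℓ k : Λ) (a b : Fin Nb),
              ‖entry B (ℓ, a) (k, b)‖ ≤
                c₁ * Real.exp (-γ₁ * (dist (y ℓ) (y m) + dist (y m) (y k)))) →
            ∀ (ℓ : Λ) (a : Fin Nb),
              ‖entry (R ∘L B ∘L R) (ℓ, a) (ℓ, a)‖ ≤
                C * 𝔡⁻¹ ^ 2 * (1 + (min γ γ₁)⁻¹ ^ (4 * d)) *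
                  Real.exp (-(min γ γ₁ / 2) * dist (y ℓ) (y m)) := by
  obtain ⟨K, hK, hlattice⟩ := exists_tsum_exp_neg_mul_dist_le (EuclideanSpace ℝ (Fin d)) h𝔪
  have hNb' : (0 : ℝ) < Nb := by exact_mod_cast hNb
  refine ⟨4 * Nb ^ 2 * c₁ * K ^ 2 * 3 ^ (2 * d), by positivity, ?_⟩
  intro Λ _ _ y hsep m 𝔡 γ γ₁ h𝔡 hγ hγ₁ R B hR hB ℓ a
  set η := min γ γ₁
  have hη : 0 < η := lt_min hγ hγ₁
  obtain ⟨hS, hS_le⟩ := hlattice y hsep (y ℓ) (half_pos hη)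
  rw [finrank_euclideanSpace_fin, inv_div, div_eq_mul_inv] at hS_le
  have hS_sq : (∑' q, Real.exp (-(η / 2) * dist (y q) (y ℓ))) ^ 2 ≤
      K ^ 2 * (3 ^ (2 * d) * (1 + η⁻¹ ^ (4 * d))) := by
    calc _ ≤ (K * (1 + 2 * η⁻¹) ^ d) ^ 2 :=
          pow_le_pow_left₀ (tsum_nonneg fun _ => (Real.exp_pos _).le) hS_le 2
      _ = K ^ 2 * (1 + 2 * η⁻¹) ^ (2 * d) := by ring
      _ ≤ K ^ 2 * (3 ^ (2 * d) * (1 + η⁻¹ ^ (4 * d))) := by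
        rw [show 4 * d = 2 * (2 * d) by ring]
        gcongr
        exact one_add_two_mul_pow_le _ (by positivity)
  have hRBR := norm_entry_comp_comp_le_of_decay hR hB (by positivity) hc₁.le (by positivity)
    (by linarith [min_le_left γ γ₁]) (by linarith [min_le_right γ γ₁]) hS a
  rw [Fintype.card_fin] at hRBR
  calc ‖entry (R ∘L B ∘L R) (ℓ, a) (ℓ, a)‖
      ≤ Nb ^ 2 * (2 / 𝔡) ^ 2 * c₁ * (∑' q, Real.exp (-(η / 2) * dist (y q) (y ℓ))) ^ 2 *
          Real.exp (-(η / 2) * dist (y ℓ) (y m)) := hRBR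
    _ ≤ Nb ^ 2 * (2 / 𝔡) ^ 2 * c₁ * (K ^ 2 * (3 ^ (2 * d) * (1 + η⁻¹ ^ (4 * d)))) *
          Real.exp (-(η / 2) * dist (y ℓ) (y m)) := by gcongr
    _ = _ := by ring

/-- Entry bound for `R·B·R` (first-derivative resolvent estimate): with
`|R^{ab}_{ℓk}| ≤ (2/𝔡)e^{−γ r_{ℓk}}` and `|B^{ab}_{ℓk}| ≤ c₁ e^{−γ₁(r_{ℓm}+r_{mk})}`, and
`η = min{γ,γ₁}`, one has `|(RBR)^{aa}_{ℓℓ}| ≤ C 𝔡^{−2}(1+η^{−4d}) e^{−(η/2) r_{ℓm}}`, with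
`C` depending only on `d, N_b, 𝔪, c₁`. -/
theorem stmt6 (d Nb : ℕ) (hd : 1 ≤ d) (hNb : 1 ≤ Nb) (𝔪 c₁ : ℝ)
    (h𝔪 : 0 < 𝔪) (hc₁ : 0 < c₁) :
    ∃ C : ℝ, 0 < C ∧
      ∀ (Λ : Type) [Countable Λ] [DecidableEq Λ]
        (y : Λ → EuclideanSpace ℝ (Fin d)),
        (∀ ℓ k : Λ, ℓ ≠ k → 𝔪 ≤ dist (y ℓ) (y k)) →
        ∀ (m : Λ) (𝔡 γ γ₁ : ℝ), 0 < 𝔡 → 0 < γ → 0 < γ₁ →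
          ∀ R B : lp (fun _ : Λ × Fin Nb => ℂ) 2 →L[ℂ] lp (fun _ : Λ × Fin Nb => ℂ) 2,
            (∀ (ℓ k : Λ) (a b : Fin Nb),
              ‖entry R (ℓ, a) (k, b)‖ ≤ (2 / 𝔡) * Real.exp (-γ * dist (y ℓ) (y k))) →
            (∀ (ℓ k : Λ) (a b : Fin Nb),
              ‖entry B (ℓ, a) (k, b)‖ ≤
                c₁ * Real.exp (-γ₁ * (dist (y ℓ) (y m) + dist (y m) (y k)))) →
            ∀ (ℓ : Λ) (a : Fin Nb),
              ‖entry (R ∘L B ∘L R) (ℓ, a) (ℓ, a)‖ ≤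
                C * 𝔡⁻¹ ^ 2 * (1 + (min γ γ₁)⁻¹ ^ (4 * d)) *
                  Real.exp (-(min γ γ₁ / 2) * dist (y ℓ) (y m)) :=
  stmt6_general d Nb hNb 𝔪 c₁ h𝔪 hc₁
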